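/- arXiv:2501.10190 — 7 statements merged into one kernel-verified Lean document; each statement's English description precedes it below -/
import Mathlib

section
/- Let S be a nonempty finite type (of states), let A be a type (of inputs), let f : A → S → S, let u : ℕ → A be ultimately periodic of type (n, m) with m > 0, and let C : ℕ → S satisfy C(i+1) = f (u i) (C i) for all i ∈ ℕ. Then there exist indices j and i with n ≤ j < i ≤ n + m·|S| such that C(i) = C(j) and i ≡ j (mod m). -/
/-- A sequence `σ` is ultimately periodic of type `(x, y)` (with `y > 0`)
if `σ (k + y) = σ k` for all `k ≥ x`. -/
def UltPeriodic {α : Type*} (σ : ℕ → α) (x y : ℕ) : Prop :=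
  ∀ k, x ≤ k → σ (k + y) = σ k

/-- Let `S` be a nonempty finite type (of states), `A` a type (of inputs),
`f : A → S → S`, `u : ℕ → A` ultimately periodic of type `(n, m)` with `m > 0`, and
`C : ℕ → S` with `C (i+1) = f (u i) (C i)` for all `i`. Then there exist indices
`j` and `i` with `n ≤ j < i ≤ n + m * |S|` such that `C i = C j` and `i ≡ j (mod m)`. -/
theorem statement0 (S A : Type) [Fintype S] [Nonempty S] (f : A → S → S)
    (u : ℕ → A) (n m : ℕ) (hm : 0 < m) (hu : UltPeriodic u n m)
    (C : ℕ → S) (hC : ∀ i : ℕ, C (i + 1) = f (u i) (C i)) :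
    ∃ j i : ℕ, n ≤ j ∧ j < i ∧ i ≤ n + m * Fintype.card S ∧
      C i = C j ∧ i ≡ j [MOD m] := by
  have h : ∃ a ∈ Finset.range (Fintype.card S + 1), ∃ b ∈ Finset.range (Fintype.card S + 1),
      a ≠ b ∧ C (n + m * a) = C (n + m * b) := by
    apply Finset.exists_ne_map_eq_of_card_lt_of_maps_to (t := Finset.univ)
    · simp
    · intro x _; exact Finset.mem_univ _
  obtain ⟨a, ha, b, hb, hab, heq⟩ := h
  simp only [Finset.mem_range, Nat.lt_succ_iff] at ha hb
  rcases Nat.lt_or_ge a b with h' | h'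
  · refine ⟨n + m * a, n + m * b, Nat.le_add_right _ _, ?_, ?_, heq.symm, ?_⟩
    · exact Nat.add_lt_add_left ((Nat.mul_lt_mul_left hm).mpr h') _
    · exact Nat.add_le_add_left (Nat.mul_le_mul_left m hb) _
    · have hle : m * a ≤ m * b := Nat.mul_le_mul_left m h'.le
      exact ((Nat.modEq_iff_dvd' (by omega)).mpr ⟨b - a, by rw [Nat.mul_sub]; omega⟩).symm
  · have h'' : b < a := lt_of_le_of_ne h' (Ne.symm hab)
    refine ⟨n + m * b, n + m * a, Nat.le_add_right _ _, ?_, ?_, heq, ?_⟩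
    · exact Nat.add_lt_add_left ((Nat.mul_lt_mul_left hm).mpr h'') _
    · exact Nat.add_le_add_left (Nat.mul_le_mul_left m ha) _
    · have hle : m * b ≤ m * a := Nat.mul_le_mul_left m h''.le
      exact ((Nat.modEq_iff_dvd' (by omega)).mpr ⟨a - b, by rw [Nat.mul_sub]; omega⟩).symm
end

section
/- Let S be a type, let A be a type, let f : A → S → S, let u : ℕ → A be ultimately periodic of type (n, m) with m > 0, and let C : ℕ → S satisfy C(i+1) = f (u i) (C i) for all i ∈ ℕ. If j and i are indices with n ≤ j < i such that C(i) = C(j) and i ≡ j (mod m), then C(k + (i − j)) = C(k) for every k ≥ j; in particular, C is ultimately periodic of type (j, i − j). -/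
lemma ult_mul {α : Type*} {σ : ℕ → α} {x y : ℕ} (h : UltPeriodic σ x y) :
    ∀ t k, x ≤ k → σ (k + t * y) = σ k := by
  intro t
  induction t with
  | zero => simp
  | succ t ih =>
      intro k hk
      have : k + (t + 1) * y = (k + y) + t * y := by ring
      rw [this, ih (k + y) (le_trans hk (Nat.le_add_right _ _)), h k hk]

/-- Let `S` and `A` be types, `f : A → S → S`, `u : ℕ → A` ultimately
periodic of type `(n, m)` with `m > 0`, and `C : ℕ → S` with `C (i+1) = f (u i) (C i)`.
If `n ≤ j < i`, `C i = C j` and `i ≡ j (mod m)`, then `C (k + (i - j)) = C k` for every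
`k ≥ j`; in particular, `C` is ultimately periodic of type `(j, i - j)`. -/
theorem statement1 (S A : Type) (f : A → S → S)
    (u : ℕ → A) (n m : ℕ) (hm : 0 < m) (hu : UltPeriodic u n m)
    (C : ℕ → S) (hC : ∀ i : ℕ, C (i + 1) = f (u i) (C i))
    (j i : ℕ) (hnj : n ≤ j) (hji : j < i) (hCij : C i = C j) (hmod : i ≡ j [MOD m]) :
    (∀ k, j ≤ k → C (k + (i - j)) = C k) ∧ UltPeriodic C j (i - j) := by
  have hdvd : m ∣ i - j := (Nat.modEq_iff_dvd' hji.le).mp hmod.symm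
  obtain ⟨t, ht⟩ := hdvd
  have hup : ∀ k, n ≤ k → u (k + (i - j)) = u k := by
    intro k hk
    rw [ht, Nat.mul_comm]
    exact ult_mul hu t k hk
  have main : ∀ k, j ≤ k → C (k + (i - j)) = C k := by
    intro k hk
    induction k, hk using Nat.le_induction with
    | base => rw [Nat.add_sub_cancel' hji.le]; exact hCij
    | succ k hk ih =>
        have : k + 1 + (i - j) = (k + (i - j)) + 1 := by ring
        rw [this, hC, hC, ih, hup k (le_trans hnj hk)]
  exact ⟨main, main⟩
end

section
/- Let M be a causal model over a finite signature (U, V, R), let u⃗ be a temporal context that is ultimately periodic of type (n, m) with m > 0, let v⃗ be a default assignment of V, and let int be a time-indexed intervention whose largest time index is n_int. Let N = ∏_{X ∈ V} |R(X)|. Then the updated computation C^int of (M, u⃗, v⃗) is ultimately periodic of some type (x, y) with x ≤ max(n, n_int + 1) + m·N and 0 < y ≤ m·N. -/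
/-- A causal model over a signature `(U, V, R)`: for every endogenous variable
`X ∈ V`, a structural function `F X` mapping complete assignments of `U ∪ V`
(given as a pair of a complete assignment of `U` and one of `V`) to `R X`.
The ranges of exogenous variables are `RU` and of endogenous variables `RV`. -/
structure CausalModel (U V : Type) (RU : U → Type) (RV : V → Type) where
  F : ∀ X : V, (∀ a : U, RU a) → (∀ x : V, RV x) → RV X

/-- The updated computation `C^int` of `(M, u⃗, v⃗)` under a time-indexed intervention
`int` (represented as a partial map sending a variable `X` and a time `i` to the value
forced on `X` at time `i`, if any): `C^int i X = y` whenever `(X, i, y) ∈ int`; for all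
other `X`, `C^int 0 X = v⃗ X` and `C^int (i+1) X = F X (u⃗ i) (C^int i)`. -/
def updComp {U V : Type} {RU : U → Type} {RV : V → Type}
    (M : CausalModel U V RU RV) (u : ℕ → ∀ a : U, RU a)
    (v : ∀ x : V, RV x) (int : ∀ X : V, ℕ → Option (RV X)) :
    ℕ → ∀ X : V, RV X
  | 0 => fun X => (int X 0).getD (v X)
  | (i + 1) => fun X => (int X (i + 1)).getD (M.F X (u i) (updComp M u v int i))

/-- Let `M` be a causal model over a finite signature `(U, V, R)`,
`u⃗` a temporal context ultimately periodic of type `(n, m)` with `m > 0`, `v⃗` a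
default assignment of `V`, and `int` a time-indexed intervention whose largest time
index is `nInt`. Let `N = ∏_{X ∈ V} |R X|`. Then the updated computation `C^int`
of `(M, u⃗, v⃗)` is ultimately periodic of some type `(x, y)` with
`x ≤ max n (nInt + 1) + m * N` and `0 < y ≤ m * N`. -/
theorem statement2 {U V : Type} {RU : U → Type} {RV : V → Type}
    [Fintype U] [Fintype V]
    [∀ a, Fintype (RU a)] [∀ x, Fintype (RV x)]
    [∀ a, Nonempty (RU a)] [∀ x, Nonempty (RV x)]
    (M : CausalModel U V RU RV)
    (u : ℕ → ∀ a : U, RU a) (n m : ℕ) (hm : 0 < m) (hu : UltPeriodic u n m)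
    (v : ∀ x : V, RV x)
    (int : ∀ X : V, ℕ → Option (RV X)) (nInt : ℕ)
    (hint : ∀ (X : V) (i : ℕ) (y : RV X), int X i = some y → i ≤ nInt) :
    ∃ x y : ℕ, 0 < y ∧ y ≤ m * ∏ X : V, Fintype.card (RV X) ∧
      x ≤ max n (nInt + 1) + m * ∏ X : V, Fintype.card (RV X) ∧
      UltPeriodic (updComp M u v int) x y := by
  classical
  set N := ∏ X : V, Fintype.card (RV X) with hN
  set b := max n (nInt + 1) with hb
  set C := updComp M u v int with hC
  -- u is periodic with period any multiple of m beyond n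
  have hu' : ∀ (j k : ℕ), n ≤ k → u (k + j * m) = u k := by
    intro j
    induction j with
    | zero => intro k _; simp
    | succ j ih =>
      intro k hk
      have : k + (j + 1) * m = (k + j * m) + m := by ring
      rw [this, hu _ (le_trans hk (Nat.le_add_right _ _)), ih k hk]
  -- int is none beyond nInt
  have hnone : ∀ (X : V) (i : ℕ), nInt < i → int X i = none := by
    intro X i hi
    cases h : int X i with
    | none => rfl
    | some y => exact absurd (hint X i y h) (Nat.not_le.mpr hi)
  -- pigeonhole on states at times b + j*m, j = 0..N
  have hcard : Fintype.card (∀ X : V, RV X) < Fintype.card (Fin (N + 1)) := by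
    simp [Fintype.card_pi, hN]
  obtain ⟨j1, j2, hne, heq⟩ :=
    Fintype.exists_ne_map_eq_of_card_lt (fun j : Fin (N + 1) => C (b + j * m)) hcard
  -- wlog j1 < j2
  wlog hlt : (j1 : ℕ) < (j2 : ℕ) generalizing j1 j2
  · exact this j2 j1 hne.symm heq.symm
      (lt_of_le_of_ne (Nat.not_lt.mp hlt) (fun h => hne (Fin.ext h.symm)))
  refine ⟨b + j1 * m, (j2 - j1 : ℕ) * m, ?_, ?_, ?_, ?_⟩
  · exact Nat.mul_pos (Nat.sub_pos_of_lt hlt) hm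
  · rw [Nat.mul_comm]
    refine Nat.mul_le_mul_left m ?_
    have := j2.isLt
    omega
  · have h1 : (j1 : ℕ) ≤ N := Nat.lt_succ_iff.mp j1.isLt
    have : (j1 : ℕ) * m ≤ m * N := by
      rw [Nat.mul_comm]; exact Nat.mul_le_mul_left m h1
    omega
  · -- periodicity by induction from b + j1*m
    set y := ((j2 : ℕ) - j1) * m with hy
    intro k hk
    induction k, hk using Nat.le_induction with
    | base =>
      have hmul : (j1 : ℕ) * m ≤ (j2 : ℕ) * m :=
        Nat.mul_le_mul_right m (le_of_lt hlt)
      have : b + (j1 : ℕ) * m + y = b + (j2 : ℕ) * m := by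
        rw [hy, Nat.sub_mul]; omega
      rw [this]
      exact heq.symm
    | succ k hk' ih =>
      have ih := ih
      have hkb : b ≤ k := le_trans (Nat.le_add_right _ _) hk'
      have hkn : n ≤ k := le_trans (le_max_left _ _) hkb
      have hki : nInt + 1 ≤ k := le_trans (le_max_right _ _) hkb
      have hu2 : u (k + y) = u k := hu' _ k hkn
      have e1 : k + 1 + y = (k + y) + 1 := by omega
      rw [e1]
      funext X
      show (int X (k + y + 1)).getD (M.F X (u (k + y)) (updComp M u v int (k + y)))
          = (int X (k + 1)).getD (M.F X (u k) (updComp M u v int k))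
      rw [show updComp M u v int (k + y) = C (k + y) from rfl,
        show updComp M u v int k = C k from rfl,
        hnone X (k + y + 1) (by omega), hnone X (k + 1) (by omega),
        hu2, ih]
end

section
/- Let σ be a linear model that is ultimately periodic of type (x, y) with y > 0, and let φ be a PLTL formula. Then for every k ≥ x + h_P(φ)·y, (σ, k) ⊨ φ if and only if (σ, k + y) ⊨ φ. -/
/-- PLTL formulas over a signature with endogenous variables `V` and range
function `R`: atoms `(X = x)`, negation, conjunction, next `○`, until `U`,
previous `⊖` and since `S`. -/
inductive PLTL (V : Type) (R : V → Type) : Type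
  | atom (X : V) (x : R X)
  | not (φ : PLTL V R)
  | and (φ ψ : PLTL V R)
  | next (φ : PLTL V R)
  | untl (φ ψ : PLTL V R)
  | prev (φ : PLTL V R)
  | since (φ ψ : PLTL V R)

/-- Truth of a PLTL formula in a linear model `σ : ℕ → (complete assignments of V)`
at a position `i`. -/
def PLTL.Sat {V : Type} {R : V → Type} (σ : ℕ → ∀ X : V, R X) :
    PLTL V R → ℕ → Prop
  | .atom X x, i => σ i X = x
  | .not φ, i => ¬ PLTL.Sat σ φ i
  | .and φ ψ, i => PLTL.Sat σ φ i ∧ PLTL.Sat σ ψ i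
  | .next φ, i => PLTL.Sat σ φ (i + 1)
  | .untl φ ψ, i => ∃ j : ℕ, PLTL.Sat σ ψ (i + j) ∧ ∀ k : ℕ, k < j → PLTL.Sat σ φ (i + k)
  | .prev φ, i => 1 ≤ i ∧ PLTL.Sat σ φ (i - 1)
  | .since φ ψ, i => ∃ k : ℕ, k ≤ i ∧ PLTL.Sat σ ψ k ∧ ∀ j : ℕ, k < j → j ≤ i → PLTL.Sat σ φ j

/-- The past-temporal height `h_P φ`: the maximum number of nested past
modalities (`⊖` or `S`) in `φ`. -/
def PLTL.hP {V : Type} {R : V → Type} : PLTL V R → ℕ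
  | .atom _ _ => 0
  | .not φ => φ.hP
  | .and φ ψ => max φ.hP ψ.hP
  | .next φ => φ.hP
  | .untl φ ψ => max φ.hP ψ.hP
  | .prev φ => φ.hP + 1
  | .since φ ψ => max φ.hP ψ.hP + 1

/-- Markey's lemma: Let `σ` be a linear model ultimately periodic of
type `(x, y)` with `y > 0`, and `φ` a PLTL formula. Then for every
`k ≥ x + h_P(φ) * y`, `(σ, k) ⊨ φ` iff `(σ, k + y) ⊨ φ`. -/
theorem statement3 {V : Type} {R : V → Type} (σ : ℕ → ∀ X : V, R X)
    (x y : ℕ) (hy : 0 < y) (hσ : UltPeriodic σ x y) (φ : PLTL V R) :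
    ∀ k : ℕ, x + φ.hP * y ≤ k → (PLTL.Sat σ φ k ↔ PLTL.Sat σ φ (k + y)) := by
  induction φ with
  | atom X v =>
    intro k hk
    have h : σ (k + y) = σ k := hσ k (by simpa [PLTL.hP] using hk)
    simp [PLTL.Sat, h]
  | not φ ih =>
    intro k hk
    exact not_congr (ih k hk)
  | and φ ψ ihφ ihψ =>
    intro k hk
    simp only [PLTL.hP] at hk
    have h1 : x + φ.hP * y ≤ k := le_trans (by have := Nat.le_max_left φ.hP ψ.hP; nlinarith) hk
    have h2 : x + ψ.hP * y ≤ k := le_trans (by have := Nat.le_max_right φ.hP ψ.hP; nlinarith) hk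
    exact and_congr (ihφ k h1) (ihψ k h2)
  | next φ ih =>
    intro k hk
    simp only [PLTL.Sat]
    have := ih (k + 1) (le_trans hk (Nat.le_succ k))
    rwa [show k + 1 + y = k + y + 1 by omega] at this
  | untl φ ψ ihφ ihψ =>
    intro k hk
    simp only [PLTL.hP] at hk
    have hF : ∀ m, PLTL.Sat σ φ (k + m) ↔ PLTL.Sat σ φ (k + y + m) := by
      intro m
      have h1 : x + φ.hP * y ≤ k + m := by
        have := Nat.le_max_left φ.hP ψ.hP; nlinarith
      have := ihφ (k + m) h1
      rwa [show k + m + y = k + y + m by omega] at this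
    have hG : ∀ m, PLTL.Sat σ ψ (k + m) ↔ PLTL.Sat σ ψ (k + y + m) := by
      intro m
      have h1 : x + ψ.hP * y ≤ k + m := by
        have := Nat.le_max_right φ.hP ψ.hP; nlinarith
      have := ihψ (k + m) h1
      rwa [show k + m + y = k + y + m by omega] at this
    constructor
    · rintro ⟨j, hj, hall⟩
      exact ⟨j, (hG j).mp hj, fun m hm => (hF m).mp (hall m hm)⟩
    · rintro ⟨j, hj, hall⟩
      exact ⟨j, (hG j).mpr hj, fun m hm => (hF m).mpr (hall m hm)⟩
  | prev φ ih =>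
    intro k hk
    simp only [PLTL.hP] at hk
    have e1 : (φ.hP + 1) * y = φ.hP * y + y := by ring
    have hk1 : 1 ≤ k := by omega
    have h1 : x + φ.hP * y ≤ k - 1 := by omega
    have := ih (k - 1) h1
    rw [show k - 1 + y = k + y - 1 by omega] at this
    simp only [PLTL.Sat]
    constructor
    · rintro ⟨_, h⟩; exact ⟨by omega, this.mp h⟩
    · rintro ⟨_, h⟩; exact ⟨hk1, this.mpr h⟩
  | since φ ψ ihφ ihψ =>
    intro k hk
    simp only [PLTL.hP] at hk
    have e1 : (max φ.hP ψ.hP + 1) * y = max φ.hP ψ.hP * y + y := by ring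
    have e2 : φ.hP * y ≤ max φ.hP ψ.hP * y := Nat.mul_le_mul_right y (Nat.le_max_left _ _)
    have e3 : ψ.hP * y ≤ max φ.hP ψ.hP * y := Nat.mul_le_mul_right y (Nat.le_max_right _ _)
    have hφb : x + φ.hP * y ≤ x + max φ.hP ψ.hP * y := by
      have := Nat.le_max_left φ.hP ψ.hP; nlinarith
    have hψb : x + ψ.hP * y ≤ x + max φ.hP ψ.hP * y := by
      have := Nat.le_max_right φ.hP ψ.hP; nlinarith
    constructor
    · rintro ⟨j, hj, hψj, hall⟩
      by_cases hc : j + y ≤ k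
      · refine ⟨j, by omega, hψj, fun m hm1 hm2 => ?_⟩
        by_cases hmk : m ≤ k
        · exact hall m hm1 hmk
        · have hb : x + φ.hP * y ≤ m - y := by omega
          have := ihφ (m - y) hb
          rw [show m - y + y = m by omega] at this
          exact this.mp (hall (m - y) (by omega) (by omega))
      · refine ⟨j + y, by omega, ?_, fun m hm1 hm2 => ?_⟩
        · exact (ihψ j (by omega)).mp hψj
        · have hb : x + φ.hP * y ≤ m - y := by omega
          have := ihφ (m - y) hb
          rw [show m - y + y = m by omega] at this
          exact this.mp (hall (m - y) (by omega) (by omega))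
    · rintro ⟨j, hj, hψj, hall⟩
      by_cases hc : j ≤ k
      · exact ⟨j, hc, hψj, fun m hm1 hm2 => hall m hm1 (by omega)⟩
      · refine ⟨j - y, by omega, ?_, fun m hm1 hm2 => ?_⟩
        · have := ihψ (j - y) (by omega)
          rw [show j - y + y = j by omega] at this
          exact this.mpr hψj
        · exact (ihφ m (by omega)).mpr (hall (m + y) (by omega) (by omega))
end

section
/- Let σ be a linear model, let y > 0 and T ∈ ℕ, and let φ and ψ be PLTL formulas such that for all k ≥ T, (σ,k) ⊨ φ iff (σ,k+y) ⊨ φ, and (σ,k) ⊨ ψ iff (σ,k+y) ⊨ ψ. Then for all k ≥ T: (σ,k) ⊨ ○φ iff (σ,k+y) ⊨ ○φ, and (σ,k) ⊨ φ U ψ iff (σ,k+y) ⊨ φ U ψ. -/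
/-- Let `σ` be a linear model, `y > 0`, `T ∈ ℕ`, and let `φ`, `ψ` be
PLTL formulas such that for all `k ≥ T`, `(σ,k) ⊨ φ ↔ (σ,k+y) ⊨ φ` and
`(σ,k) ⊨ ψ ↔ (σ,k+y) ⊨ ψ`. Then for all `k ≥ T`:
`(σ,k) ⊨ ○φ ↔ (σ,k+y) ⊨ ○φ` and `(σ,k) ⊨ φ U ψ ↔ (σ,k+y) ⊨ φ U ψ`. -/
theorem statement5 {V : Type} {R : V → Type} (σ : ℕ → ∀ X : V, R X)
    (y : ℕ) (hy : 0 < y) (T : ℕ) (φ ψ : PLTL V R)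
    (hφ : ∀ k : ℕ, T ≤ k → (PLTL.Sat σ φ k ↔ PLTL.Sat σ φ (k + y)))
    (hψ : ∀ k : ℕ, T ≤ k → (PLTL.Sat σ ψ k ↔ PLTL.Sat σ ψ (k + y))) :
    ∀ k : ℕ, T ≤ k →
      ((PLTL.Sat σ φ.next k ↔ PLTL.Sat σ φ.next (k + y)) ∧
       (PLTL.Sat σ (φ.untl ψ) k ↔ PLTL.Sat σ (φ.untl ψ) (k + y))) := by
  intro k hk
  constructor
  · show PLTL.Sat σ φ (k + 1) ↔ PLTL.Sat σ φ (k + y + 1)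
    have := hφ (k + 1) (by omega)
    have e : k + 1 + y = k + y + 1 := by omega
    rw [e] at this
    exact this
  · constructor
    · rintro ⟨j, hj, hall⟩
      refine ⟨j, ?_, ?_⟩
      · have := (hψ (k + j) (by omega)).1 hj
        have e : k + j + y = k + y + j := by omega
        rwa [e] at this
      · intro m hm
        have := (hφ (k + m) (by omega)).1 (hall m hm)
        have e : k + m + y = k + y + m := by omega
        rwa [e] at this
    · rintro ⟨j, hj, hall⟩
      refine ⟨j, ?_, ?_⟩
      · have e : k + j + y = k + y + j := by omega
        exact (hψ (k + j) (by omega)).2 (by rwa [← e] at hj)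
      · intro m hm
        have e : k + m + y = k + y + m := by omega
        exact (hφ (k + m) (by omega)).2 (by rw [e]; exact hall m hm)
end

section
/- Let σ be a linear model, let y > 0 and T ∈ ℕ, and let φ and ψ be PLTL formulas such that for all k ≥ T, (σ,k) ⊨ φ iff (σ,k+y) ⊨ φ, and (σ,k) ⊨ ψ iff (σ,k+y) ⊨ ψ. Then for all k ≥ T + y, (σ,k) ⊨ φ S ψ if and only if (σ,k+y) ⊨ φ S ψ. -/
/-- Let `σ` be a linear model, `y > 0`, `T ∈ ℕ`, and let `φ`, `ψ` be
PLTL formulas such that for all `k ≥ T`, `(σ,k) ⊨ φ ↔ (σ,k+y) ⊨ φ` and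
`(σ,k) ⊨ ψ ↔ (σ,k+y) ⊨ ψ`. Then for all `k ≥ T + y`,
`(σ,k) ⊨ φ S ψ ↔ (σ,k+y) ⊨ φ S ψ`. -/
theorem statement6 {V : Type} {R : V → Type} (σ : ℕ → ∀ X : V, R X)
    (y : ℕ) (hy : 0 < y) (T : ℕ) (φ ψ : PLTL V R)
    (hφ : ∀ k : ℕ, T ≤ k → (PLTL.Sat σ φ k ↔ PLTL.Sat σ φ (k + y)))
    (hψ : ∀ k : ℕ, T ≤ k → (PLTL.Sat σ ψ k ↔ PLTL.Sat σ ψ (k + y))) :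
    ∀ k : ℕ, T + y ≤ k →
      (PLTL.Sat σ (φ.since ψ) k ↔ PLTL.Sat σ (φ.since ψ) (k + y)) := by
  intro k hk
  constructor
  · rintro ⟨m, hm, hψm, hφm⟩
    by_cases hmT : T ≤ m
    · refine ⟨m + y, by omega, (hψ m hmT).mp hψm, ?_⟩
      intro j hj1 hj2
      have h1 : m < j - y := by omega
      have h2 : j - y ≤ k := by omega
      have := hφm (j - y) h1 h2
      have := (hφ (j - y) (by omega)).mp this
      have : j - y + y = j := by omega
      simpa [this] using (hφ (j - y) (by omega)).mp (hφm (j - y) h1 h2)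
    · refine ⟨m, by omega, hψm, ?_⟩
      intro j hj1 hj2
      by_cases hjk : j ≤ k
      · exact hφm j hj1 hjk
      · have h1 : m < j - y := by omega
        have h2 : j - y ≤ k := by omega
        have heq : j - y + y = j := by omega
        have := (hφ (j - y) (by omega)).mp (hφm (j - y) h1 h2)
        rwa [heq] at this
  · rintro ⟨m, hm, hψm, hφm⟩
    by_cases hmT : T + y ≤ m
    · refine ⟨m - y, by omega, ?_, ?_⟩
      · have heq : m - y + y = m := by omega
        exact (hψ (m - y) (by omega)).mpr (by rwa [heq])
      · intro j hj1 hj2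
        exact (hφ j (by omega)).mpr (hφm (j + y) (by omega) (by omega))
    · exact ⟨m, by omega, hψm, fun j hj1 hj2 => hφm j hj1 (by omega)⟩
end

section
/- Let σ be a linear model that is ultimately periodic of type (x, y) with y > 0, let φ be a PLTL formula, and let k ≥ x + (h_P(φ)+1)·y. Define k' = x + h_P(φ)·y + ((k − x − h_P(φ)·y) mod y). Then x + h_P(φ)·y ≤ k' < x + (h_P(φ)+1)·y and (σ, k) ⊨ φ if and only if (σ, k') ⊨ φ. -/
theorem pltl_step {V : Type} {R : V → Type} (σ : ℕ → ∀ X : V, R X)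
    (x y : ℕ) (hy : 0 < y) (hσ : UltPeriodic σ x y) :
    ∀ φ : PLTL V R, ∀ i, x + φ.hP * y ≤ i →
      (PLTL.Sat σ φ i ↔ PLTL.Sat σ φ (i + y)) := by
  intro φ
  induction φ with
  | atom X a =>
      intro i hi
      simp only [PLTL.Sat]
      rw [hσ i (by simp [PLTL.hP] at hi; omega)]
  | not φ ih =>
      intro i hi
      simp only [PLTL.Sat]
      rw [ih i hi]
  | and φ ψ ihφ ihψ =>
      intro i hi
      have h1 : φ.hP * y ≤ max φ.hP ψ.hP * y := Nat.mul_le_mul (le_max_left _ _) le_rfl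
      have h2 : ψ.hP * y ≤ max φ.hP ψ.hP * y := Nat.mul_le_mul (le_max_right _ _) le_rfl
      simp only [PLTL.hP] at hi
      simp only [PLTL.Sat]
      rw [ihφ i (by omega), ihψ i (by omega)]
  | next φ ih =>
      intro i hi
      simp only [PLTL.hP] at hi
      simp only [PLTL.Sat]
      rw [ih (i + 1) (by omega), Nat.add_right_comm]
  | untl φ ψ ihφ ihψ =>
      intro i hi
      have h1 : φ.hP * y ≤ max φ.hP ψ.hP * y := Nat.mul_le_mul (le_max_left _ _) le_rfl
      have h2 : ψ.hP * y ≤ max φ.hP ψ.hP * y := Nat.mul_le_mul (le_max_right _ _) le_rfl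
      simp only [PLTL.hP] at hi
      simp only [PLTL.Sat]
      constructor
      · rintro ⟨j, hj, hall⟩
        refine ⟨j, ?_, fun m hm => ?_⟩
        · rw [Nat.add_right_comm, ← ihψ (i + j) (by omega)]; exact hj
        · rw [Nat.add_right_comm, ← ihφ (i + m) (by omega)]; exact hall m hm
      · rintro ⟨j, hj, hall⟩
        refine ⟨j, ?_, fun m hm => ?_⟩
        · rw [ihψ (i + j) (by omega), Nat.add_right_comm]; exact hj
        · rw [ihφ (i + m) (by omega), Nat.add_right_comm]; exact hall m hm
  | prev φ ih =>
      intro i hi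
      simp only [PLTL.hP] at hi
      have he : (φ.hP + 1) * y = φ.hP * y + y := by ring
      simp only [PLTL.Sat]
      have hi1 : 1 ≤ i := by omega
      have heq : i + y - 1 = (i - 1) + y := by omega
      rw [heq, ← ih (i - 1) (by omega)]
      constructor
      · rintro ⟨_, h⟩; exact ⟨by omega, h⟩
      · rintro ⟨_, h⟩; exact ⟨by omega, h⟩
  | since φ ψ ihφ ihψ =>
      intro i hi
      have he : (max φ.hP ψ.hP + 1) * y = max φ.hP ψ.hP * y + y := by ring
      have h1 : φ.hP * y ≤ max φ.hP ψ.hP * y := Nat.mul_le_mul (le_max_left _ _) le_rfl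
      have h2 : ψ.hP * y ≤ max φ.hP ψ.hP * y := Nat.mul_le_mul (le_max_right _ _) le_rfl
      simp only [PLTL.hP] at hi
      simp only [PLTL.Sat]
      constructor
      · rintro ⟨k, hk, hψk, hall⟩
        by_cases hc : k + y ≤ i
        · refine ⟨k, by omega, hψk, fun j hkj hji => ?_⟩
          by_cases hji' : j ≤ i
          · exact hall j hkj hji'
          · have hjy : x + φ.hP * y ≤ j - y := by omega
            have := (ihφ (j - y) hjy).mp (hall (j - y) (by omega) (by omega))
            rwa [Nat.sub_add_cancel (by omega)] at this
        · refine ⟨k + y, by omega, ?_, fun j hkj hji => ?_⟩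
          · exact (ihψ k (by omega)).mp hψk
          · have := (ihφ (j - y) (by omega)).mp (hall (j - y) (by omega) (by omega))
            rwa [Nat.sub_add_cancel (by omega)] at this
      · rintro ⟨k, hk, hψk, hall⟩
        by_cases hc : k ≤ i
        · exact ⟨k, hc, hψk, fun j hkj hji => hall j hkj (by omega)⟩
        · refine ⟨k - y, by omega, ?_, fun j hkj hji => ?_⟩
          · have := ihψ (k - y) (by omega)
            rw [Nat.sub_add_cancel (by omega)] at this
            exact this.mpr hψk
          · exact (ihφ j (by omega)).mpr (hall (j + y) (by omega) (by omega))

theorem pltl_iter {V : Type} {R : V → Type} (σ : ℕ → ∀ X : V, R X)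
    (x y : ℕ) (hy : 0 < y) (hσ : UltPeriodic σ x y) (φ : PLTL V R)
    (i : ℕ) (hi : x + φ.hP * y ≤ i) (m : ℕ) :
    PLTL.Sat σ φ i ↔ PLTL.Sat σ φ (i + m * y) := by
  induction m with
  | zero => simp
  | succ n ih =>
      rw [ih, pltl_step σ x y hy hσ φ (i + n * y) (by omega)]
      ring_nf

/-- Let `σ` be a linear model ultimately periodic of type `(x, y)` with
`y > 0`, `φ` a PLTL formula, and `k ≥ x + (h_P(φ)+1) * y`. Define
`k' = x + h_P(φ) * y + ((k - x - h_P(φ) * y) % y)`. Then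
`x + h_P(φ) * y ≤ k' < x + (h_P(φ)+1) * y` and `(σ, k) ⊨ φ ↔ (σ, k') ⊨ φ`. -/
theorem statement8 {V : Type} {R : V → Type} (σ : ℕ → ∀ X : V, R X)
    (x y : ℕ) (hy : 0 < y) (hσ : UltPeriodic σ x y) (φ : PLTL V R)
    (k : ℕ) (hk : x + (φ.hP + 1) * y ≤ k) :
    x + φ.hP * y ≤ x + φ.hP * y + ((k - x - φ.hP * y) % y) ∧
    x + φ.hP * y + ((k - x - φ.hP * y) % y) < x + (φ.hP + 1) * y ∧
    (PLTL.Sat σ φ k ↔ PLTL.Sat σ φ (x + φ.hP * y + ((k - x - φ.hP * y) % y))) := by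
  have he : (φ.hP + 1) * y = φ.hP * y + y := by ring
  set b := x + φ.hP * y with hb
  have hmod : (k - x - φ.hP * y) % y < y := Nat.mod_lt _ hy
  refine ⟨by omega, by omega, ?_⟩
  have hdm := Nat.div_add_mod (k - x - φ.hP * y) y
  have hkb : b ≤ k := by omega
  have hc : y * ((k - x - φ.hP * y) / y) = ((k - x - φ.hP * y) / y) * y := by ring
  have hkeq : k = (b + (k - x - φ.hP * y) % y) + ((k - x - φ.hP * y) / y) * y := by
    omega
  rw [show PLTL.Sat σ φ k ↔ PLTL.Sat σ φ ((b + (k - x - φ.hP * y) % y) +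
      ((k - x - φ.hP * y) / y) * y) from hkeq ▸ Iff.rfl,
    ← pltl_iter σ x y hy hσ φ (b + (k - x - φ.hP * y) % y) (by omega)]
end
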